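/- Let A be a real symmetric positive definite n × n matrix whose quadratic form is given, in an orthonormal basis (v_1, …, v_n) of ℝⁿ, by ⟨Ax, x⟩ = Σᵢ wᵢ² ⟨x, vᵢ⟩² with wᵢ > 0 (so {wᵢ²} are the eigenvalues of A). Given nonnegative integers n_1, …, n_n, define f : ℝⁿ → ℝ by f(x) = Πᵢ Ψ_{nᵢ}(√wᵢ · ⟨x, vᵢ⟩), where Ψ_p are the Hermite functions. Then f satisfies -Δf(x) + ⟨Ax, x⟩ f(x) = (Σᵢ (2nᵢ + 1) wᵢ) f(x) for all x ∈ ℝⁿ; that is, Σᵢ (2nᵢ + 1) wᵢ is an eigenvalue of the harmonic oscillator K = -Δ + ⟨Ax, x⟩ with eigenfunction f. -/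

import Mathlib

open scoped RealInnerProductSpace

/-- Second directional derivative of `u` in the direction `v` at the point `z`. -/
noncomputable def dirDeriv2 {E : Type*} [NormedAddCommGroup E] [NormedSpace ℝ E]
    (u : E → ℝ) (v : E) (z : E) : ℝ :=
  fderiv ℝ (fun w => fderiv ℝ u w v) z v

/-- The Laplacian `Δu(x) = Σᵢ ∂²u/∂xᵢ²(x)` on `ℝⁿ`. -/
noncomputable def lap {n : ℕ} (u : EuclideanSpace ℝ (Fin n) → ℝ)
    (x : EuclideanSpace ℝ (Fin n)) : ℝ :=
  ∑ i : Fin n, dirDeriv2 u (EuclideanSpace.single i 1) x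

/-- The quadratic form `⟨Ax, x⟩ = Σ_{i,j} a_{ij} xᵢ xⱼ` of a matrix `A`. -/
def quadForm {n : ℕ} (A : Matrix (Fin n) (Fin n) ℝ) (x : EuclideanSpace ℝ (Fin n)) : ℝ :=
  ∑ i : Fin n, ∑ j : Fin n, A i j * x i * x j

/-- The physicists' Hermite polynomials: `H_0 = 1`, `H_{p+1}(x) = 2x H_p(x) - H_p'(x)`. -/
noncomputable def physHermite : ℕ → Polynomial ℝ
  | 0 => 1
  | p + 1 => 2 * Polynomial.X * physHermite p - Polynomial.derivative (physHermite p)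

/-- The Hermite functions `Ψ_p(x) = (√π 2^p p!)^{-1/2} H_p(x) e^{-x²/2}`. -/
noncomputable def hermiteFun (p : ℕ) (x : ℝ) : ℝ :=
  (Real.sqrt Real.pi * 2 ^ p * Nat.factorial p : ℝ) ^ (-(1 : ℝ) / 2) *
    (physHermite p).eval x * Real.exp (-x ^ 2 / 2)

/-!
Each factor `φ(t) = Ψ_p(√w t)` solves the one-dimensional oscillator equation
`φ'' = (w² t² - (2p + 1) w) φ`: writing `Ψ_p = c H_p e^{-x²/2}`, differentiation acts on the
polynomial factor as `P ↦ P' - X P`, and applied twice to `H_p` this gives `(X² - (2p + 1)) H_p`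
by Hermite's equation `H_p'' = 2X H_p' - 2p H_p`. Since the `vᵢ` are orthonormal, the Laplacian
(a trace of the Hessian) of `∏ᵢ ψᵢ ⟪x, vᵢ⟫` is `∑ᵢ ψᵢ'' ⟪x, vᵢ⟫ ∏_{k ≠ i} ψₖ ⟪x, vₖ⟫`, and the
potential `∑ᵢ wᵢ² ⟪x, vᵢ⟫²` cancels the `wᵢ² t²` terms, leaving the eigenvalue `∑ᵢ (2nᵢ + 1) wᵢ`.
-/

open Polynomial Function Finset

theorem physHermite_succ (p : ℕ) :
    physHermite (p + 1) = 2 * X * physHermite p - derivative (physHermite p) :=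
  rfl

theorem derivative_physHermite_succ (p : ℕ) :
    derivative (physHermite (p + 1)) = 2 * (p + 1 : ℝ[X]) * physHermite p := by
  induction p with
  | zero => simp [physHermite]
  | succ p ih =>
    rw [physHermite_succ (p + 1)]
    simp only [derivative_sub, derivative_mul, ih, derivative_ofNat, derivative_X, derivative_add,
      derivative_natCast, derivative_one]
    push_cast
    linear_combination (-2 * (p : ℝ[X]) - 2) * physHermite_succ p

theorem derivative_derivative_physHermite (p : ℕ) :
    derivative (derivative (physHermite p))
      = 2 * X * derivative (physHermite p) - 2 * (p : ℝ[X]) * physHermite p := by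
  cases p with
  | zero => simp [physHermite]
  | succ p =>
    simp only [derivative_physHermite_succ, derivative_mul, derivative_ofNat, derivative_add,
      derivative_natCast, derivative_one]
    push_cast
    linear_combination (2 * (p : ℝ[X]) + 2) * physHermite_succ p

noncomputable def gaussianMul (P : ℝ[X]) (x : ℝ) : ℝ :=
  P.eval x * Real.exp (-x ^ 2 / 2)

noncomputable def gaussianDerivative (P : ℝ[X]) : ℝ[X] :=
  derivative P - X * P

theorem hasDerivAt_gaussianMul (P : ℝ[X]) (x : ℝ) :
    HasDerivAt (gaussianMul P) (gaussianMul (gaussianDerivative P) x) x := by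
  have hexp : HasDerivAt (fun x : ℝ => -x ^ 2 / 2) (-x) x := by
    refine ((hasDerivAt_pow 2 x).neg.div_const 2).congr_deriv ?_
    norm_num
    ring
  refine ((P.hasDerivAt x).mul hexp.exp).congr_deriv ?_
  simp only [gaussianMul, gaussianDerivative, eval_sub, eval_mul, eval_X]
  ring

theorem gaussianDerivative_gaussianDerivative_physHermite (p : ℕ) :
    gaussianDerivative (gaussianDerivative (physHermite p))
      = (X ^ 2 - (2 * (p : ℝ[X]) + 1)) * physHermite p := by
  simp only [gaussianDerivative, derivative_sub, derivative_mul, derivative_X,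
    derivative_derivative_physHermite]
  ring

theorem hermiteFun_eq_const_mul_gaussianMul (p : ℕ) :
    ∃ c : ℝ, hermiteFun p = fun x => c * gaussianMul (physHermite p) x :=
  ⟨_, funext fun _ => mul_assoc _ _ _⟩

theorem differentiable_hermiteFun (p : ℕ) : Differentiable ℝ (hermiteFun p) := by
  obtain ⟨c, hc⟩ := hermiteFun_eq_const_mul_gaussianMul p
  rw [hc]
  exact fun x => ((hasDerivAt_gaussianMul _ x).const_mul c).differentiableAt

theorem hasDerivAt_deriv_hermiteFun (p : ℕ) (x : ℝ) :
    HasDerivAt (deriv (hermiteFun p)) ((x ^ 2 - (2 * p + 1)) * hermiteFun p x) x := by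
  obtain ⟨c, hc⟩ := hermiteFun_eq_const_mul_gaussianMul p
  have hderiv : deriv (hermiteFun p)
      = fun y => c * gaussianMul (gaussianDerivative (physHermite p)) y := by
    rw [hc]
    exact funext fun y => ((hasDerivAt_gaussianMul _ y).const_mul c).deriv
  rw [hderiv, hc]
  refine ((hasDerivAt_gaussianMul _ x).const_mul c).congr_deriv ?_
  simp only [gaussianDerivative_gaussianDerivative_physHermite, gaussianMul, eval_mul, eval_sub,
    eval_add, eval_pow, eval_X, eval_one, eval_natCast, eval_ofNat]
  ring

theorem hasDerivAt_hermiteFun_const_mul (p : ℕ) (a t : ℝ) :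
    HasDerivAt (fun t => hermiteFun p (a * t)) (a * deriv (hermiteFun p) (a * t)) t :=
  (((differentiable_hermiteFun p) (a * t)).hasDerivAt.comp t (hasDerivAt_const_mul a)).congr_deriv
    (mul_comm _ _)

theorem hasDerivAt_sqrt_mul_deriv_hermiteFun {w : ℝ} (hw : 0 ≤ w) (p : ℕ) (t : ℝ) :
    HasDerivAt (fun t => √w * deriv (hermiteFun p) (√w * t))
      ((w ^ 2 * t ^ 2 - (2 * p + 1) * w) * hermiteFun p (√w * t)) t := by
  refine (((hasDerivAt_deriv_hermiteFun p (√w * t)).comp t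
    (hasDerivAt_const_mul √w)).const_mul √w).congr_deriv ?_
  rw [mul_pow, Real.sq_sqrt hw]
  linear_combination (w * t ^ 2 - (2 * p + 1)) * hermiteFun p (√w * t) * Real.mul_self_sqrt hw

section RidgeProduct

variable {E ι : Type*} [NormedAddCommGroup E] [InnerProductSpace ℝ E] [DecidableEq ι]

theorem hasDerivAt_update_of_hasDerivAt {ψ ψ' ψ'' : ι → ℝ → ℝ}
    (hψ : ∀ i t, HasDerivAt (ψ i) (ψ' i t) t) (hψ' : ∀ i t, HasDerivAt (ψ' i) (ψ'' i t) t)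
    (i k : ι) (t : ℝ) : HasDerivAt (update ψ i (ψ' i) k) (update ψ' i (ψ'' i) k t) t := by
  rcases eq_or_ne k i with rfl | hki
  · simpa only [update_self] using hψ' k t
  · simpa only [update_of_ne hki] using hψ k t

variable [Fintype ι]

theorem prod_update_apply {α M : Type*} [CommMonoid M] (ψ : ι → α → M) (i : ι) (g : α → M)
    (t : ι → α) : ∏ k, update ψ i g k (t k) = g (t i) * ∏ k ∈ univ.erase i, ψ k (t k) := by
  simp only [apply_update (fun k (φ : α → M) => φ (t k)), prod_update_of_mem (mem_univ i),
    sdiff_singleton_eq_erase]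

theorem hasFDerivAt_prod_inner (v : ι → E) {ψ ψ' : ι → ℝ → ℝ}
    (hψ : ∀ i t, HasDerivAt (ψ i) (ψ' i t) t) (x : E) :
    HasFDerivAt (fun y => ∏ i, ψ i ⟪y, v i⟫)
      (∑ i, (∏ k, update ψ i (ψ' i) k ⟪x, v k⟫) • innerSL ℝ (v i)) x := by
  have hcoord : ∀ i, HasFDerivAt (fun y => ψ i ⟪y, v i⟫) (ψ' i ⟪x, v i⟫ • innerSL ℝ (v i)) x :=
    fun i => (hψ i _).comp_hasFDerivAt x <| (innerSL ℝ (v i)).hasFDerivAt.congr_of_eventuallyEq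
      (.of_forall fun y => real_inner_comm (v i) y)
  refine (HasFDerivAt.finsetProd fun i _ => hcoord i).congr_fderiv ?_
  simp only [smul_smul, prod_update_apply ψ _ _ fun k => ⟪x, v k⟫, mul_comm]

theorem fderiv_prod_inner_apply (v : ι → E) {ψ ψ' : ι → ℝ → ℝ}
    (hψ : ∀ i t, HasDerivAt (ψ i) (ψ' i t) t) (x e : E) :
    fderiv ℝ (fun y => ∏ i, ψ i ⟪y, v i⟫) x e
      = ∑ i, (∏ k, update ψ i (ψ' i) k ⟪x, v k⟫) * ⟪v i, e⟫ := by
  simp [(hasFDerivAt_prod_inner v hψ x).fderiv]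

theorem dirDeriv2_prod_inner (v : ι → E) {ψ ψ' ψ'' : ι → ℝ → ℝ}
    (hψ : ∀ i t, HasDerivAt (ψ i) (ψ' i t) t) (hψ' : ∀ i t, HasDerivAt (ψ' i) (ψ'' i t) t)
    (x e : E) :
    dirDeriv2 (fun y => ∏ i, ψ i ⟪y, v i⟫) e x
      = ∑ i, ⟪v i, e⟫ * ∑ j,
          (∏ k, update (update ψ i (ψ' i)) j (update ψ' i (ψ'' i) j) k ⟪x, v k⟫) * ⟪v j, e⟫ := by
  have hsum := HasFDerivAt.fun_sum fun i (_ : i ∈ univ) =>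
    (hasFDerivAt_prod_inner v (hasDerivAt_update_of_hasDerivAt hψ hψ' i) x).mul_const ⟪v i, e⟫
  rw [dirDeriv2, funext fun y => fderiv_prod_inner_apply v hψ y e, hsum.fderiv]
  simp

theorem Orthonormal.sum_inner_mul_sum_mul_inner {κ : Type*} [Fintype κ] {v : ι → E}
    (hv : Orthonormal ℝ v) (b : OrthonormalBasis κ ℝ E) (D : ι → ι → ℝ) :
    ∑ l, ∑ i, ⟪v i, b l⟫ * ∑ j, D i j * ⟪v j, b l⟫ = ∑ i, D i i := by
  calc ∑ l, ∑ i, ⟪v i, b l⟫ * ∑ j, D i j * ⟪v j, b l⟫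
      = ∑ i, ∑ j, D i j * ∑ l, ⟪v i, b l⟫ * ⟪b l, v j⟫ := by
        simp only [mul_sum]
        rw [sum_comm]
        refine sum_congr rfl fun i _ => ?_
        rw [sum_comm]
        refine sum_congr rfl fun j _ => sum_congr rfl fun l _ => ?_
        rw [real_inner_comm (v j) (b l)]
        ring
    _ = ∑ i, ∑ j, D i j * ⟪v i, v j⟫ := by simp only [b.sum_inner_mul_inner]
    _ = ∑ i, D i i := by simp [orthonormal_iff_ite.mp hv]

theorem sum_dirDeriv2_prod_inner {κ : Type*} [Fintype κ] (b : OrthonormalBasis κ ℝ E)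
    {v : ι → E} (hv : Orthonormal ℝ v) {ψ ψ' ψ'' : ι → ℝ → ℝ}
    (hψ : ∀ i t, HasDerivAt (ψ i) (ψ' i t) t) (hψ' : ∀ i t, HasDerivAt (ψ' i) (ψ'' i t) t)
    (x : E) :
    ∑ l, dirDeriv2 (fun y => ∏ i, ψ i ⟪y, v i⟫) (b l) x
      = ∑ i, ∏ k, update ψ i (ψ'' i) k ⟪x, v k⟫ := by
  simp only [dirDeriv2_prod_inner v hψ hψ', hv.sum_inner_mul_sum_mul_inner b, update_idem,
    update_self]

end RidgeProduct

section Laplacian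

variable {n : ℕ} {ι : Type*} [Fintype ι] [DecidableEq ι] {v : ι → EuclideanSpace ℝ (Fin n)}

theorem lap_eq_sum_dirDeriv2 (u : EuclideanSpace ℝ (Fin n) → ℝ) (x : EuclideanSpace ℝ (Fin n)) :
    lap u x = ∑ l, dirDeriv2 u (EuclideanSpace.basisFun (Fin n) ℝ l) x := by
  simp only [lap, EuclideanSpace.basisFun_apply]

theorem neg_lap_prod_inner_add_mul (hv : Orthonormal ℝ v) {ψ ψ' V : ι → ℝ → ℝ} {μ : ι → ℝ}
    (hψ : ∀ i t, HasDerivAt (ψ i) (ψ' i t) t)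
    (hψ' : ∀ i t, HasDerivAt (ψ' i) ((V i t - μ i) * ψ i t) t) (x : EuclideanSpace ℝ (Fin n)) :
    -lap (fun y => ∏ i, ψ i ⟪y, v i⟫) x + (∑ i, V i ⟪x, v i⟫) * ∏ i, ψ i ⟪x, v i⟫
      = (∑ i, μ i) * ∏ i, ψ i ⟪x, v i⟫ := by
  have hterm : ∀ i, ∏ k, update ψ i (fun t => (V i t - μ i) * ψ i t) k ⟪x, v k⟫
      = (V i ⟪x, v i⟫ - μ i) * ∏ k, ψ k ⟪x, v k⟫ := fun i => by
    rw [prod_update_apply, mul_assoc, mul_prod_erase univ (fun k => ψ k ⟪x, v k⟫) (mem_univ i)]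
  rw [lap_eq_sum_dirDeriv2, sum_dirDeriv2_prod_inner _ hv hψ hψ', sum_congr rfl fun i _ => hterm i,
    ← sum_mul, sum_sub_distrib]
  ring

end Laplacian

theorem harmonic_oscillator_eigenfunction_general (n : ℕ) (A : Matrix (Fin n) (Fin n) ℝ)
    (v : Fin n → EuclideanSpace ℝ (Fin n)) (hv : Orthonormal ℝ v)
    (w : Fin n → ℝ) (hw : ∀ i, 0 < w i)
    (hQ : ∀ x, quadForm A x = ∑ i : Fin n, (w i) ^ 2 * ⟪x, v i⟫ ^ 2)
    (m : Fin n → ℕ) :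
    ∀ x, -lap (fun y => ∏ i : Fin n, hermiteFun (m i) (Real.sqrt (w i) * ⟪y, v i⟫)) x
        + quadForm A x * ∏ i : Fin n, hermiteFun (m i) (Real.sqrt (w i) * ⟪x, v i⟫)
      = (∑ i : Fin n, (2 * m i + 1) * w i) *
          ∏ i : Fin n, hermiteFun (m i) (Real.sqrt (w i) * ⟪x, v i⟫) := by
  intro x
  rw [hQ x]
  exact neg_lap_prod_inner_add_mul hv
    (fun i t => hasDerivAt_hermiteFun_const_mul (m i) √(w i) t)
    (fun i t => hasDerivAt_sqrt_mul_deriv_hermiteFun (hw i).le (m i) t) x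

/-- if `A` is symmetric positive definite with
`⟨Ax, x⟩ = Σᵢ wᵢ² ⟨x, vᵢ⟩²` for an orthonormal basis `(vᵢ)` and `wᵢ > 0`, then for
nonnegative integers `nᵢ` the function `f(x) = Πᵢ Ψ_{nᵢ}(√wᵢ ⟨x, vᵢ⟩)` satisfies
`-Δf + ⟨Ax, x⟩ f = (Σᵢ (2nᵢ + 1) wᵢ) f`, i.e. `Σᵢ (2nᵢ+1) wᵢ` is an eigenvalue of
the harmonic oscillator `K = -Δ + ⟨Ax, x⟩` with eigenfunction `f`. -/
theorem harmonic_oscillator_eigenfunction (n : ℕ) (A : Matrix (Fin n) (Fin n) ℝ)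
    (hA : A.IsSymm) (hApos : A.PosDef)
    (v : Fin n → EuclideanSpace ℝ (Fin n)) (hv : Orthonormal ℝ v)
    (w : Fin n → ℝ) (hw : ∀ i, 0 < w i)
    (hQ : ∀ x, quadForm A x = ∑ i : Fin n, (w i) ^ 2 * ⟪x, v i⟫ ^ 2)
    (m : Fin n → ℕ) :
    ∀ x, -lap (fun y => ∏ i : Fin n, hermiteFun (m i) (Real.sqrt (w i) * ⟪y, v i⟫)) x
        + quadForm A x * ∏ i : Fin n, hermiteFun (m i) (Real.sqrt (w i) * ⟪x, v i⟫)
      = (∑ i : Fin n, (2 * m i + 1) * w i) *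
          ∏ i : Fin n, hermiteFun (m i) (Real.sqrt (w i) * ⟪x, v i⟫) :=
  harmonic_oscillator_eigenfunction_general n A v hv w hw hQ m
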